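/- Let W, V be antisymmetric n×n complex matrices and suppose every element of the kernel of the map X ↦ XW + WX is symmetric. Then there exists a symmetric matrix T with TW + WT = V. -/

import Mathlib

/-!
The trace pairing `(A, X) ↦ tr (A X)` is a nondegenerate bilinear form on square matrices for
which `L_W : X ↦ X W + W X` is self-adjoint, so the range of `L_W` is the orthogonal of its kernel.
Kernel elements are symmetric by hypothesis and `V` is antisymmetric, hence orthogonal, so
`V = L_W X` for some `X`. Since `W` is antisymmetric, transposition gives `L_W Xᵀ = V` as well,
and `T = (X + Xᵀ) / 2` is the symmetric solution.
-/

open Matrix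

namespace LinearMap.BilinForm

variable {K V : Type*} [Field K] [AddCommGroup V] [Module K V] [FiniteDimensional K V]

theorem mem_range_iff_forall_mem_ker_apply_eq_zero {B : LinearMap.BilinForm K V}
    (hB : B.Nondegenerate) {f : V →ₗ[K] V} (hf : IsAdjointPair B B f f) {v : V} :
    v ∈ range f ↔ ∀ k ∈ ker f, B k v = 0 := by
  constructor
  · rintro ⟨x, rfl⟩ k hk
    rw [← hf, mem_ker.mp hk, zero_left]
  · intro hv
    rw [← Subspace.dualAnnihilator_dualCoannihilator_eq (W := range f),
      Submodule.mem_dualCoannihilator]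
    intro φ hφ
    -- represent `φ` as `B z`; then `z` is orthogonal to the range, i.e. `f z = 0`
    set z := (B.toDual hB).symm φ
    have hz : z ∈ ker f := by
      refine mem_ker.mpr (hB.1 _ fun y => ?_)
      rw [hf, apply_toDual_symm_apply]
      exact (Submodule.mem_dualAnnihilator φ).mp hφ _ (mem_range_self f y)
    simpa [z] using hv z hz

end LinearMap.BilinForm

namespace Matrix

variable {ι K : Type*} [Fintype ι] [Field K]

def traceMulForm : LinearMap.BilinForm K (Matrix ι ι K) :=
  (LinearMap.mul K (Matrix ι ι K)).compr₂ (traceLinearMap ι K K)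

@[simp]
theorem traceMulForm_apply (A X : Matrix ι ι K) : traceMulForm A X = trace (A * X) :=
  rfl

theorem traceMulForm_nondegenerate :
    (traceMulForm : LinearMap.BilinForm K (Matrix ι ι K)).Nondegenerate :=
  ⟨fun A hA => ext_iff_trace_mul_right.mpr fun X => by simpa using hA X,
    fun X hX => ext_iff_trace_mul_left.mpr fun A => by simpa using hX A⟩

def sylvesterMap (W : Matrix ι ι K) : Matrix ι ι K →ₗ[K] Matrix ι ι K :=
  LinearMap.mulRight K W + LinearMap.mulLeft K W

@[simp]
theorem sylvesterMap_apply (W X : Matrix ι ι K) : sylvesterMap W X = X * W + W * X :=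
  rfl

theorem isAdjointPair_traceMulForm_sylvesterMap (W : Matrix ι ι K) :
    LinearMap.IsAdjointPair traceMulForm traceMulForm (sylvesterMap W) (sylvesterMap W) := by
  intro A X
  simp only [traceMulForm_apply, sylvesterMap_apply, add_mul, mul_add, trace_add, mul_assoc]
  rw [trace_mul_comm W, mul_assoc, add_comm]

theorem transpose_sylvesterMap {W : Matrix ι ι K} (hW : Wᵀ = -W) (X : Matrix ι ι K) :
    (sylvesterMap W X)ᵀ = -sylvesterMap W Xᵀ := by
  simp only [sylvesterMap_apply, transpose_add, transpose_mul, hW, mul_neg, neg_mul, neg_add]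
  abel

theorem trace_mul_eq_zero_of_symm_of_antisymm [NeZero (2 : K)] {A V : Matrix ι ι K}
    (hA : Aᵀ = A) (hV : Vᵀ = -V) : trace (A * V) = 0 := by
  have h : trace (A * V) = -trace (A * V) := by
    conv_lhs => rw [← trace_transpose, transpose_mul, hA, hV, neg_mul, trace_neg, trace_mul_comm]
  have h2 : (2 : K) * trace (A * V) = 0 := by linear_combination h
  exact (mul_eq_zero.mp h2).resolve_left two_ne_zero

theorem exists_symm_sylvesterMap_eq_of_mem_range [NeZero (2 : K)] {W V : Matrix ι ι K}
    (hW : Wᵀ = -W) (hV : Vᵀ = -V) (h : V ∈ LinearMap.range (sylvesterMap W)) :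
    ∃ T : Matrix ι ι K, Tᵀ = T ∧ sylvesterMap W T = V := by
  obtain ⟨X, hX⟩ := h
  have hXt : sylvesterMap W Xᵀ = V := by
    rw [← neg_neg (sylvesterMap W Xᵀ), ← transpose_sylvesterMap hW, hX, hV, neg_neg]
  refine ⟨(2⁻¹ : K) • (X + Xᵀ), ?_, ?_⟩
  · rw [transpose_smul, transpose_add, transpose_transpose, add_comm]
  · rw [map_smul, map_add, hX, hXt, ← two_smul K V, smul_smul,
      inv_mul_cancel₀ two_ne_zero, one_smul]

theorem exists_symm_sylvesterMap_eq [NeZero (2 : K)] {W V : Matrix ι ι K}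
    (hW : Wᵀ = -W) (hV : Vᵀ = -V) (hker : ∀ X ∈ LinearMap.ker (sylvesterMap W), Xᵀ = X) :
    ∃ T : Matrix ι ι K, Tᵀ = T ∧ sylvesterMap W T = V := by
  refine exists_symm_sylvesterMap_eq_of_mem_range hW hV ?_
  rw [LinearMap.BilinForm.mem_range_iff_forall_mem_ker_apply_eq_zero traceMulForm_nondegenerate
    (isAdjointPair_traceMulForm_sylvesterMap W)]
  exact fun A hA => trace_mul_eq_zero_of_symm_of_antisymm (hker A hA) hV

end Matrix

/-- If `W`, `V` are antisymmetric complex matrices and every element of the kernel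
of `X ↦ XW + WX` is symmetric, then there exists a symmetric `T` with
`TW + WT = V`. -/
theorem exists_symmetric_solution_of_sylvester (n : ℕ)
    (W V : Matrix (Fin n) (Fin n) ℂ)
    (hW : Wᵀ = -W) (hV : Vᵀ = -V)
    (hker : ∀ X : Matrix (Fin n) (Fin n) ℂ, X * W + W * X = 0 → Xᵀ = X) :
    ∃ T : Matrix (Fin n) (Fin n) ℂ, Tᵀ = T ∧ T * W + W * T = V :=
  exists_symm_sylvesterMap_eq hW hV hker
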